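/- Let p be a prime and let G be a finite non-abelian p-group. Then Aut_c(G) = Autcent(G) if and only if Aut_c(G) is isomorphic as a group to Hom(G/Z(G), γ_2(G)) and γ_2(G) = Z(G). -/

import Mathlib

/-- `Aut^M(G)`: automorphisms `f` of `G` with `g⁻¹ * f g ∈ M` for all `g`. -/
def autM {G : Type*} [Group G] (M : Subgroup G) : Subgroup (MulAut G) where
  carrier := {f | ∀ g : G, g⁻¹ * f g ∈ M}
  one_mem' := by intro g; simpa using M.one_mem
  mul_mem' := by
    intro f₁ f₂ h₁ h₂ g
    have key : g⁻¹ * (f₁ * f₂) g = (g⁻¹ * f₂ g) * ((f₂ g)⁻¹ * f₁ (f₂ g)) := by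
      rw [MulAut.mul_apply]; group
    rw [key]; exact M.mul_mem (h₂ g) (h₁ (f₂ g))
  inv_mem' := by
    intro f hf g
    have h := M.inv_mem (hf (f⁻¹ g))
    simpa [MulAut.apply_inv_self, mul_inv_rev] using h

/-- `Aut_N(G)`: automorphisms of `G` fixing `N` elementwise. -/
def autN {G : Type*} [Group G] (N : Subgroup G) : Subgroup (MulAut G) where
  carrier := {f | ∀ n ∈ N, f n = n}
  one_mem' := fun n _ => rfl
  mul_mem' := by
    intro f₁ f₂ h₁ h₂ n hn
    rw [MulAut.mul_apply, h₂ n hn, h₁ n hn]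
  inv_mem' := by
    intro f hf n hn
    exact f.injective (by rw [MulAut.apply_inv_self]; exact (hf n hn).symm)

/-- `Aut_c^m(G)`: `m`-th class preserving automorphisms, conjugation by
elements of `γ_m(G) = lowerCentralSeries G (m-1)`. -/
def autC (G : Type*) [Group G] (m : ℕ) : Subgroup (MulAut G) where
  carrier := {f | ∀ g : G, ∃ x ∈ Subgroup.lowerCentralSeries (⊤ : Subgroup G) (m - 1), f g = x⁻¹ * g * x}
  one_mem' := fun g => ⟨1, Subgroup.one_mem _, by simp⟩
  mul_mem' := by
    intro f₁ f₂ h₁ h₂ g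
    obtain ⟨x, hx, hx2⟩ := h₂ g
    obtain ⟨y, hy, hy2⟩ := h₁ (x⁻¹ * g * x)
    exact ⟨x * y, Subgroup.mul_mem _ hx hy, by rw [MulAut.mul_apply, hx2, hy2]; group⟩
  inv_mem' := by
    intro f hf g
    obtain ⟨x, hx, hx2⟩ := hf (f⁻¹ g)
    refine ⟨x⁻¹, Subgroup.inv_mem _ hx, ?_⟩
    rw [MulAut.apply_inv_self] at hx2
    rw [inv_inv]
    conv_rhs => rw [hx2]
    group

/-- A group is purely non-abelian if it has no non-trivial abelian direct factor. -/
def PurelyNonabelian (H : Type u) [Group H] : Prop :=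
  ¬ ∃ (K B : Type u) (_ : Group K) (_ : CommGroup B),
      Nontrivial B ∧ Nonempty (H ≃* K × B)

/-!
For `θ : G →* Z(G)` the twist `g ↦ g * θ g` is an endomorphism of `G`; when it is injective
it is a central automorphism, so if `Autcent(G) = Aut_c(G)` it is class preserving: it fixes
`Z(G)` pointwise, i.e. `θ (Z(G)) = 1`, and `θ G ≤ γ₂(G)`. Inner automorphisms give
`γ₂(G) ≤ Z(G)`.

If some `z ∈ Z(G)` is not a `p`-th power modulo `γ₂(G)`, a homomorphism from `G` to the cyclic
group generated by a non-trivial commutator that does not kill `z` gives an injective twist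
with `θ z ≠ 1`. Otherwise `θ (Z(G))` consists of `p`-th powers in `Z(G)` for every `θ`, so every
twist is injective; for `z ∈ Z(G) \ γ₂(G)` a homomorphism `G/γ₂(G) →* ⟨z⟩` which is onto, or
non-trivial on `z` (as `|z|` divides the exponent of `G/γ₂(G)` or the other way round),
contradicts one of the two properties. Hence `γ₂(G) = Z(G)`, and the central automorphisms
fixing `Z(G)` correspond to `Hom(G/Z(G), Z(G))`; the converse is a count.
-/

open Subgroup

open scoped IsMulCommutative commutatorElement

section CyclicCodomain

variable {A C : Type*} [CommGroup A] [Finite A] [CommGroup C] [IsCyclic C]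

theorem IsCyclic.hasEnoughRootsOfUnity [Finite C] {n : ℕ} (hn : n ∣ Nat.card C) :
    HasEnoughRootsOfUnity C n where
  prim := by
    obtain ⟨g, hg⟩ := IsCyclic.exists_ofOrder_eq_natCard (α := C)
    refine ⟨g ^ (Nat.card C / n), IsPrimitiveRoot.iff_orderOf.mpr ?_⟩
    exact hg ▸ orderOf_pow_orderOf_div (hg ▸ Nat.card_pos.ne') (hg ▸ hn)
  cyc :=
    have : IsCyclic Cˣ := isCyclic_of_surjective toUnits toUnits.surjective
    Subgroup.isCyclic _

theorem exists_monoidHom_apply_ne_one_of_exponent_dvd [Finite C]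
    (h : Monoid.exponent A ∣ Nat.card C) {a : A} (ha : a ≠ 1) : ∃ φ : A →* C, φ a ≠ 1 := by
  have := IsCyclic.hasEnoughRootsOfUnity h
  obtain ⟨φ, hφ⟩ := CommGroup.exists_apply_ne_one_of_hasEnoughRootsOfUnity A C ha
  exact ⟨(Units.coeHom C).comp φ, by simpa using hφ⟩

theorem exists_retraction_zpowers {x : A} (hx : orderOf x = Monoid.exponent A) :
    ∃ r : A →* zpowers x, ∀ y : zpowers x, r y = y := by
  have := IsCyclic.hasEnoughRootsOfUnity (C := zpowers x) (n := Monoid.exponent A)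
    (by rw [Nat.card_zpowers, hx])
  obtain ⟨r, hr⟩ := MonoidHom.domRestrict_surjective (zpowers x) (zpowers x)
    (toUnits : zpowers x ≃* (zpowers x)ˣ).toMonoidHom
  refine ⟨(Units.coeHom _).comp r, fun y => ?_⟩
  simpa using congrArg Units.val (DFunLike.congr_fun hr y)

theorem exists_monoidHom_surjective_of_dvd_exponent (h : Nat.card C ∣ Monoid.exponent A) :
    ∃ φ : A →* C, Function.Surjective φ := by
  obtain ⟨x, hx⟩ := Monoid.exists_orderOf_eq_exponent (Monoid.ExponentExists.of_finite (G := A))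
  obtain ⟨r, hr⟩ := exists_retraction_zpowers hx
  obtain ⟨c, hc⟩ := IsCyclic.exists_generator (α := C)
  have hgen : ∀ y : zpowers x, y ∈ zpowers (⟨x, mem_zpowers x⟩ : zpowers x) := by
    rintro ⟨y, hy⟩
    obtain ⟨k, rfl⟩ := mem_zpowers_iff.mp hy
    exact mem_zpowers_iff.mpr ⟨k, rfl⟩
  have hord : orderOf c ∣ orderOf (⟨x, mem_zpowers x⟩ : zpowers x) := by
    rwa [orderOf_mk, hx, orderOf_eq_card_of_forall_mem_zpowers hc]
  let ψ := monoidHomOfForallMemZpowers hgen hord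
  refine ⟨ψ.comp r, fun y => ?_⟩
  obtain ⟨k, rfl⟩ := mem_zpowers_iff.mp (hc y)
  refine ⟨x ^ k, ?_⟩
  simp [ψ, hr ⟨x, mem_zpowers x⟩]

end CyclicCodomain

section CentralAutomorphisms

variable {G : Type*} [Group G]

theorem mem_autC_one_iff {f : MulAut G} :
    f ∈ autC G 1 ↔ ∀ g : G, ∃ x : G, f g = x⁻¹ * g * x := by
  simp [autC]

theorem MulAut.conj_mem_autC_one (x : G) : MulAut.conj x ∈ autC G 1 :=
  mem_autC_one_iff.mpr fun g => ⟨x⁻¹, by simp [mul_assoc]⟩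

theorem autC_one_le_autM_commutator : autC G 1 ≤ autM (commutator G) := by
  intro f hf g
  obtain ⟨x, hx⟩ := mem_autC_one_iff.mp hf g
  rw [hx, show g⁻¹ * (x⁻¹ * g * x) = ⁅g⁻¹, x⁻¹⁆ by group]
  exact commutator_mem_commutator (mem_top _) (mem_top _)

theorem autC_one_le_autN_center : autC G 1 ≤ autN (center G) := by
  intro f hf z hz
  obtain ⟨x, hx⟩ := mem_autC_one_iff.mp hf z
  rw [hx, mem_center_iff.mp hz x⁻¹, inv_mul_cancel_right]

theorem commutator_le_center_of_autC_one_le (h : autC G 1 ≤ autM (center G)) :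
    commutator G ≤ center G := by
  rw [commutator_def, commutator_le]
  rintro g - x -
  simpa [commutatorElement_def, mul_assoc] using h (MulAut.conj_mem_autC_one x) g⁻¹

def centralAutHom (f : autM (center G)) : G →* center G where
  toFun g := ⟨g⁻¹ * (f : MulAut G) g, f.2 g⟩
  map_one' := by simp
  map_mul' a b := by
    ext
    have h := mem_center_iff.mp (f.2 a) b⁻¹
    simp only [map_mul, mul_inv_rev, Subgroup.coe_mul]
    calc b⁻¹ * a⁻¹ * ((f : MulAut G) a * (f : MulAut G) b)
        = b⁻¹ * (a⁻¹ * (f : MulAut G) a) * (f : MulAut G) b := by group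
      _ = a⁻¹ * (f : MulAut G) a * (b⁻¹ * (f : MulAut G) b) := by rw [h]; group

@[simp]
theorem coe_centralAutHom_apply (f : autM (center G)) (g : G) :
    (centralAutHom f g : G) = g⁻¹ * (f : MulAut G) g := rfl

theorem autM_center_le_autN_commutator : autM (center G) ≤ autN (commutator G) := by
  intro f hf c hc
  have h1 : centralAutHom ⟨f, hf⟩ c = 1 := Abelianization.commutator_subset_ker _ hc
  exact (inv_mul_eq_one.mp (congrArg Subtype.val h1)).symm

def centralTwist (θ : G →* center G) : G →* G where
  toFun g := g * θ g
  map_one' := by simp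
  map_mul' a b := by
    simp only [map_mul, Subgroup.coe_mul]
    rw [mul_assoc a, ← mul_assoc b, mem_center_iff.mp (θ a).2 b]
    group

@[simp]
theorem centralTwist_apply (θ : G →* center G) (g : G) : centralTwist θ g = g * θ g := rfl

theorem centralTwist_injective {θ : G →* center G} (N : Subgroup G) (hN : N ≤ θ.ker)
    (hθ : ∀ g, (θ g : G) ∈ N) : Function.Injective (centralTwist θ) := by
  refine (injective_iff_map_eq_one _).mpr fun g hg => ?_
  have hgN : g ∈ N := eq_inv_of_mul_eq_one_left hg ▸ inv_mem (hθ g)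
  simpa [MonoidHom.mem_ker.mp (hN hgN)] using hg

theorem centralTwist_injective_of_pow [Finite G] {p : ℕ} [Fact p.Prime] (hpG : IsPGroup p G)
    {θ : G →* center G} (hθ : ∀ z ∈ center G, ∃ v, θ z = v ^ p) :
    Function.Injective (centralTwist θ) := by
  refine (injective_iff_map_eq_one _).mpr fun g hg => ?_
  have hg' : g = (θ g : G)⁻¹ := eq_inv_of_mul_eq_one_left hg
  -- `g` is a fixed point of `z ↦ (θ z)⁻¹` on the centre, whose image consists of `p`-th powers.
  have hpow : ∀ k, ∃ v : center G, g = (v : G) ^ p ^ k := by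
    intro k
    induction k with
    | zero => exact ⟨(θ g)⁻¹, by simpa using hg'⟩
    | succ k ih =>
      obtain ⟨v, hv⟩ := ih
      obtain ⟨u, hu⟩ := hθ v v.2
      refine ⟨u⁻¹, ?_⟩
      rw [hg', hv, map_pow, hu, pow_succ', pow_mul]
      simp
  obtain ⟨m, hm⟩ := IsPGroup.iff_card.mp (hpG.to_subgroup (center G))
  obtain ⟨v, hv⟩ := hpow m
  rw [hv, ← hm, ← Subgroup.coe_pow, pow_card_eq_one', Subgroup.coe_one]

noncomputable def centralTwistAut [Finite G] (θ : G →* center G)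
    (hθ : Function.Injective (centralTwist θ)) : MulAut G :=
  MulEquiv.ofBijective (centralTwist θ) (Finite.injective_iff_bijective.mp hθ)

@[simp]
theorem centralTwistAut_apply [Finite G] (θ : G →* center G)
    (hθ : Function.Injective (centralTwist θ)) (g : G) : centralTwistAut θ hθ g = g * θ g := rfl

theorem centralTwistAut_mem_autM [Finite G] (θ : G →* center G)
    (hθ : Function.Injective (centralTwist θ)) : centralTwistAut θ hθ ∈ autM (center G) :=
  fun g => by simp

noncomputable def autMCenterInfAutNCenterEquiv [Finite G] :
    ↥(autM (center G) ⊓ autN (center G)) ≃* (G ⧸ center G →* center G) where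
  toFun f := QuotientGroup.lift _ (centralAutHom ⟨f, f.2.1⟩) fun z hz => by
    simp [MonoidHom.mem_ker, Subtype.ext_iff, f.2.2 z hz]
  invFun τ :=
    ⟨centralTwistAut (τ.comp (QuotientGroup.mk' _))
        (centralTwist_injective (center G)
          (fun z hz => by simp [(QuotientGroup.eq_one_iff z).mpr hz]) fun g => (τ _).2),
      centralTwistAut_mem_autM _ _, fun z hz => by simp [(QuotientGroup.eq_one_iff z).mpr hz]⟩
  left_inv f := by ext g; simp
  right_inv τ := by ext g; simp
  map_mul' f₁ f₂ := by
    ext g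
    have hfix : (f₁ : MulAut G) (g⁻¹ * (f₂ : MulAut G) g) = g⁻¹ * (f₂ : MulAut G) g :=
      f₁.2.2 _ (f₂.2.1 g)
    rw [map_mul, map_inv] at hfix
    simp only [coe_mul, QuotientGroup.lift_comp_mk', coe_centralAutHom_apply, MulAut.mul_apply,
      MonoidHom.coe_comp, QuotientGroup.coe_mk', Function.comp_apply, MonoidHom.mul_apply,
      QuotientGroup.lift_mk, mul_assoc, mul_right_inj]
    rw [← hfix, mul_inv_cancel_left]

theorem autC_one_eq_autM_center_of_card [Finite G] (hZ : commutator G = center G)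
    (hcard : Nat.card (autC G 1) = Nat.card (G ⧸ center G →* commutator G)) :
    autC G 1 = autM (center G) := by
  have hS : autM (center G) = autM (center G) ⊓ autN (center G) :=
    le_antisymm (le_inf le_rfl (hZ ▸ autM_center_le_autN_commutator (G := G))) inf_le_left
  have : Finite (MulAut G) := inferInstanceAs (Finite (G ≃* G))
  refine eq_of_le_of_card_ge (hZ ▸ autC_one_le_autM_commutator) (le_of_eq ?_)
  calc Nat.card (autM (center G))
      = Nat.card (G ⧸ center G →* center G) :=
        Nat.card_congr ((MulEquiv.subgroupCongr hS).trans autMCenterInfAutNCenterEquiv).toEquiv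
    _ = Nat.card (autC G 1) := by
        rw [hcard, Nat.card_congr (MulEquiv.monoidHomCongrRightEquiv
          (MulEquiv.subgroupCongr hZ.symm))]

end CentralAutomorphisms

section CentralClassPreserving

variable {G : Type*} [Group G] [Finite G]

theorem apply_eq_one_of_mem_center (h : autM (center G) ≤ autC G 1) {θ : G →* center G}
    (hθ : Function.Injective (centralTwist θ)) {z : G} (hz : z ∈ center G) : θ z = 1 := by
  have hfix : z * θ z = z := autC_one_le_autN_center (h (centralTwistAut_mem_autM θ hθ)) z hz
  exact Subtype.ext (mul_eq_left.mp hfix)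

theorem apply_mem_commutator (h : autM (center G) ≤ autC G 1) {θ : G →* center G}
    (hθ : Function.Injective (centralTwist θ)) (g : G) : (θ g : G) ∈ commutator G := by
  simpa using autC_one_le_autM_commutator (h (centralTwistAut_mem_autM θ hθ)) g

variable {p : ℕ} [Fact p.Prime]

theorem exists_pow_eq_of_mem_center (hpG : IsPGroup p G)
    (hna : ¬ ∀ a b : G, a * b = b * a) (h : autC G 1 = autM (center G)) {z : G}
    (hz : z ∈ center G) :
    ∃ b : Abelianization G, b ^ p = Abelianization.of z := by
  by_contra hz'
  let R := (powMonoidHom p : Abelianization G →* Abelianization G).range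
  have hzR : (Abelianization.of z : Abelianization G ⧸ R) ≠ 1 := by
    rw [Ne, QuotientGroup.eq_one_iff]
    exact hz'
  have hexp : Monoid.exponent (Abelianization G ⧸ R) ∣ p := by
    refine Monoid.exponent_dvd_of_forall_pow_eq_one fun x => ?_
    induction x using QuotientGroup.induction_on with
    | H b => exact (QuotientGroup.eq_one_iff _).mpr ⟨b, rfl⟩
  push Not at hna
  obtain ⟨a, b, hab⟩ := hna
  have hw : ⁅a, b⁆ ≠ 1 := mt commutatorElement_eq_one_iff_mul_comm.mp hab
  have hwγ : ⁅a, b⁆ ∈ commutator G := commutator_mem_commutator (mem_top a) (mem_top b)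
  obtain ⟨φ, hφ⟩ := exists_monoidHom_apply_ne_one_of_exponent_dvd (C := zpowers ⁅a, b⁆)
    (hexp.trans (Nat.card_zpowers ⁅a, b⁆ ▸ hpG.dvd_orderOf hw)) hzR
  let θ : G →* center G := (inclusion (zpowers_le.mpr
    (commutator_le_center_of_autC_one_le h.le hwγ))).comp
    (φ.comp ((QuotientGroup.mk' R).comp Abelianization.of))
  have hθ := centralTwist_injective (commutator G) (Abelianization.commutator_subset_ker θ)
    fun g => zpowers_le.mpr hwγ (φ _).2
  apply hφ
  simpa [θ, map_eq_one_iff _ (inclusion_injective _)] using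
    apply_eq_one_of_mem_center h.ge hθ hz

theorem center_le_commutator_of_autC_eq (hpG : IsPGroup p G)
    (hna : ¬ ∀ a b : G, a * b = b * a) (h : autC G 1 = autM (center G)) :
    center G ≤ commutator G := by
  intro z hz
  by_contra hzγ
  have hθ (θ : G →* center G) : Function.Injective (centralTwist θ) :=
    centralTwist_injective_of_pow hpG fun z hz => by
      obtain ⟨b, hb⟩ := exists_pow_eq_of_mem_center hpG hna h hz
      exact ⟨Abelianization.lift θ b, by rw [← map_pow, hb, Abelianization.lift_apply_of]⟩
  let embed (φ : Abelianization G →* zpowers z) : G →* center G :=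
    (inclusion (zpowers_le.mpr hz)).comp (φ.comp Abelianization.of)
  obtain ⟨i, hi⟩ := IsPGroup.iff_orderOf.mp hpG z
  obtain ⟨j, hj⟩ : ∃ j, Monoid.exponent (Abelianization G) = p ^ j :=
    isPGroup_iff_exponent_eq_pow.mp (hpG.to_quotient _)
  rcases le_total i j with hij | hji
  · obtain ⟨φ, hφ⟩ := exists_monoidHom_surjective_of_dvd_exponent (A := Abelianization G)
      (C := zpowers z) (by rw [Nat.card_zpowers, hi, hj]; exact pow_dvd_pow p hij)
    obtain ⟨a, ha⟩ := hφ ⟨z, mem_zpowers z⟩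
    obtain ⟨g, rfl⟩ : ∃ g, Abelianization.of g = a := QuotientGroup.mk_surjective a
    exact hzγ (by simpa [embed, ha] using apply_mem_commutator h.ge (hθ (embed φ)) g)
  · have hz' : Abelianization.of z ≠ 1 := fun h1 => hzγ (by rwa [← Abelianization.ker_of])
    obtain ⟨φ, hφ⟩ := exists_monoidHom_apply_ne_one_of_exponent_dvd (C := zpowers z)
      (by rw [Nat.card_zpowers, hi, hj]; exact pow_dvd_pow p hji) hz'
    exact hφ (by simpa [embed, map_eq_one_iff _ (inclusion_injective _)] using
      apply_eq_one_of_mem_center h.ge (hθ (embed φ)) hz)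

end CentralClassPreserving

/-- for a finite non-abelian `p`-group `G`,
`Aut_c(G) = Autcent(G)` iff `Aut_c(G)` is isomorphic as a group to
`Hom(G/Z(G), γ_2(G))` (with pointwise multiplication) and `γ_2(G) = Z(G)`. -/
theorem statement12 {p : ℕ} (hp : p.Prime) {G : Type u} [Group G] [Finite G]
    (hpG : IsPGroup p G) (hna : ¬ ∀ a b : G, a * b = b * a) :
    autC G 1 = autM (Subgroup.center G) ↔
      ((∃ φ : (autC G 1) ≃
          ((G ⧸ Subgroup.center G) →* (Subgroup.lowerCentralSeries (⊤ : Subgroup G) 1)),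
        ∀ (f₁ f₂ : autC G 1) (x : G ⧸ Subgroup.center G),
          φ (f₁ * f₂) x = φ f₁ x * φ f₂ x) ∧
        Subgroup.lowerCentralSeries (⊤ : Subgroup G) 1 = Subgroup.center G) := by
  have : Fact p.Prime := ⟨hp⟩
  rw [top_lowerCentralSeries_one]
  constructor
  · intro h
    have hZ : commutator G = center G := le_antisymm (commutator_le_center_of_autC_one_le h.le)
      (center_le_commutator_of_autC_eq hpG hna h)
    have hC : autC G 1 = autM (center G) ⊓ autN (center G) :=
      le_antisymm (le_inf h.le autC_one_le_autN_center) (h ▸ inf_le_left)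
    let φ := ((MulEquiv.subgroupCongr hC).trans autMCenterInfAutNCenterEquiv).toEquiv.trans
      (MulEquiv.monoidHomCongrRightEquiv (MulEquiv.subgroupCongr hZ.symm))
    exact ⟨⟨φ, fun f₁ f₂ x => by simp [φ]⟩, hZ⟩
  · rintro ⟨⟨φ, -⟩, hZ⟩
    exact autC_one_eq_autM_center_of_card hZ (Nat.card_congr φ)
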